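/- arXiv:1009.3951 — 4 statements merged into one kernel-verified Lean document; each statement's English description precedes it below -/
import Mathlib

section
/- Fix n ≥ 2 and α with 1 < α < ∞. For probability distributions p = (p₁, ..., pₙ) with p₁ ≥ p₂ ≥ ... ≥ pₙ, the Rényi entropy H_α(p) = (1/(1-α)) ln(Σᵢ pᵢ^α) satisfies lim_{p₁→1} H_α(p)/(1-p₁) = α/(α-1). -/
/-! Write `t = 1 - p₁`. The remaining coordinates carry total mass `t`, so for `α ≥ 1`
`(1 - t)^α ≤ ∑ pᵢ^α ≤ (1 - t)^α + t^α`. As `α > 1`, the correction `t^α` is `o(t)`, hence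
`-ln ∑ pᵢ^α = α t + o(t)` and `H_α(p) / t = -ln (∑ pᵢ^α) / ((α - 1) t) → α / (α - 1)`. -/

open Real Filter Topology Finset

theorem sum_rpow_le_rpow_sum {ι : Type*} (s : Finset ι) {f : ι → ℝ} (hf : ∀ i ∈ s, 0 ≤ f i)
    {α : ℝ} (hα : 1 ≤ α) : ∑ i ∈ s, f i ^ α ≤ (∑ i ∈ s, f i) ^ α := by
  set T := ∑ i ∈ s, f i
  have hT : 0 ≤ T := sum_nonneg hf
  have hsplit : ∀ x : ℝ, 0 ≤ x → x ^ α = x ^ (α - 1) * x := fun x hx => by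
    simpa using rpow_add' hx (show α - 1 + 1 ≠ 0 by linarith)
  calc ∑ i ∈ s, f i ^ α = ∑ i ∈ s, f i ^ (α - 1) * f i :=
        sum_congr rfl fun i hi => hsplit _ (hf i hi)
    _ ≤ ∑ i ∈ s, T ^ (α - 1) * f i := by
        gcongr with i hi
        exacts [hf i hi, hf i hi, single_le_sum hf hi]
    _ = T ^ α := by rw [← mul_sum, hsplit T hT]

theorem rpow_le_sum_rpow_le_of_sum_eq_one {ι : Type*} [Fintype ι] {p : ι → ℝ}
    (hp : ∀ i, 0 ≤ p i) (hsum : ∑ i, p i = 1) (i₀ : ι) {α : ℝ} (hα : 1 ≤ α) :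
    p i₀ ^ α ≤ ∑ i, p i ^ α ∧ ∑ i, p i ^ α ≤ p i₀ ^ α + (1 - p i₀) ^ α := by
  classical
  refine ⟨single_le_sum (fun i _ => rpow_nonneg (hp i) α) (mem_univ i₀), ?_⟩
  have hrest : ∑ i ∈ univ.erase i₀, p i = 1 - p i₀ := by
    rw [← hsum, ← add_sum_erase _ _ (mem_univ i₀)]; ring
  rw [← add_sum_erase _ _ (mem_univ i₀), ← hrest]
  gcongr
  exact sum_rpow_le_rpow_sum _ (fun i _ => hp i) hα

theorem neg_log_bounds_of_rpow_le {α t S : ℝ} (hα : 0 ≤ α) (ht₀ : 0 ≤ t) (ht₁ : t < 1)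
    (hlo : (1 - t) ^ α ≤ S) (hhi : S ≤ (1 - t) ^ α + t ^ α) :
    α * t - t ^ α / (1 - t) ^ α ≤ -log S ∧ -log S ≤ α * t / (1 - t) := by
  have hu : 0 < 1 - t := by linarith
  have hua : 0 < (1 - t) ^ α := rpow_pos_of_pos hu α
  have hlog_upper : log (1 - t) ≤ -t := by linarith [log_le_sub_one_of_pos hu]
  have hlog_lower : -(t / (1 - t)) ≤ log (1 - t) := by
    have := one_sub_inv_le_log_of_pos hu
    rwa [show 1 - (1 - t)⁻¹ = -(t / (1 - t)) by field_simp; ring] at this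
  constructor
  · set x := t ^ α / (1 - t) ^ α
    have hx : 0 ≤ x := by positivity
    have hfactor : (1 - t) ^ α + t ^ α = (1 - t) ^ α * (1 + x) := by
      rw [mul_add, mul_one, mul_div_cancel₀ _ hua.ne']
    have : log S ≤ α * log (1 - t) + x := calc
      log S ≤ log ((1 - t) ^ α * (1 + x)) := log_le_log (hua.trans_le hlo) (hfactor ▸ hhi)
      _ = α * log (1 - t) + log (1 + x) := by rw [log_mul hua.ne' (by positivity), log_rpow hu]
      _ ≤ α * log (1 - t) + x := by linarith [log_le_sub_one_of_pos (by positivity : 0 < 1 + x)]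
    nlinarith
  · have : α * log (1 - t) ≤ log S := by rw [← log_rpow hu]; exact log_le_log hua hlo
    have := mul_le_mul_of_nonneg_left hlog_lower hα
    rw [mul_div_assoc]; linarith

theorem renyiEntropy_div_bounds_of_rpow_le {α t S : ℝ} (hα : 1 < α) (ht₀ : 0 < t)
    (ht₁ : t < 1) (hlo : (1 - t) ^ α ≤ S) (hhi : S ≤ (1 - t) ^ α + t ^ α) :
    (α - t ^ (α - 1) / (1 - t) ^ α) / (α - 1) ≤ 1 / (1 - α) * log S / t ∧
      1 / (1 - α) * log S / t ≤ α / (α - 1) / (1 - t) := by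
  obtain ⟨hlower, hupper⟩ := neg_log_bounds_of_rpow_le (by linarith) ht₀.le ht₁ hlo hhi
  have hα₁ : 0 < α - 1 := by linarith
  have hu : 0 < 1 - t := by linarith
  have hratio : 1 / (1 - α) * log S / t = -log S / ((α - 1) * t) := by
    field_simp [show 1 - α ≠ 0 by linarith]; ring
  have htα : t ^ α = t ^ (α - 1) * t := by
    simpa using rpow_add ht₀ (α - 1) 1
  rw [hratio]
  constructor
  · calc (α - t ^ (α - 1) / (1 - t) ^ α) / (α - 1)
        = (α * t - t ^ α / (1 - t) ^ α) / ((α - 1) * t) := by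
          rw [htα]; field_simp
      _ ≤ -log S / ((α - 1) * t) := by gcongr
  · calc -log S / ((α - 1) * t) ≤ α * t / (1 - t) / ((α - 1) * t) := by gcongr
      _ = α / (α - 1) / (1 - t) := by field_simp

theorem tendsto_rpow_div_one_sub_rpow_nhds_zero {β : ℝ} (hβ : 0 < β) (γ : ℝ) :
    Tendsto (fun t : ℝ => t ^ β / (1 - t) ^ γ) (𝓝 0) (𝓝 0) := by
  have hcont : ContinuousAt (fun t : ℝ => t ^ β / (1 - t) ^ γ) 0 := by
    fun_prop (disch := first | exact Or.inr hβ.le | norm_num)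
  simpa [zero_rpow hβ.ne'] using hcont.tendsto

theorem exists_pos_abs_sub_lt_of_squeeze {g h : ℝ → ℝ} {L ε : ℝ}
    (hg : Tendsto g (𝓝[>] 0) (𝓝 L)) (hh : Tendsto h (𝓝[>] 0) (𝓝 L)) (hε : 0 < ε) :
    ∃ δ > 0, ∀ t x, 0 < t → t < δ → g t ≤ x → x ≤ h t → |x - L| < ε := by
  have hev : ∀ᶠ t in 𝓝[>] 0, L - ε < g t ∧ h t < L + ε :=
    (hg.eventually (lt_mem_nhds (by linarith))).and (hh.eventually (gt_mem_nhds (by linarith)))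
  obtain ⟨δ, hδ, hδev⟩ := (nhdsGT_basis (0 : ℝ)).eventually_iff.1 hev
  refine ⟨δ, hδ, fun t x ht₀ htδ hgx hxh => abs_sub_lt_iff.2 ?_⟩
  obtain ⟨hgt, hht⟩ := hδev ⟨ht₀, htδ⟩
  constructor <;> linarith

/-- For `1 < α < ∞` and probability distributions `p` on `n ≥ 2` points sorted
in decreasing order, the Rényi entropy `H_α(p) = (1/(1-α)) ln (∑ pᵢ^α)` satisfies
`lim_{p₁ → 1} H_α(p) / (1 - p₁) = α / (α - 1)`. -/
theorem renyiEntropy_ratio_tendsto (n : ℕ) (hn : 2 ≤ n) (α : ℝ) (hα : 1 < α) :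
    ∀ ε > (0 : ℝ), ∃ δ > (0 : ℝ), ∀ p : Fin n → ℝ,
      (∀ i, 0 ≤ p i) → (∑ i, p i = 1) → (∀ i j : Fin n, i ≤ j → p j ≤ p i) →
      1 - δ < p ⟨0, by omega⟩ → p ⟨0, by omega⟩ < 1 →
      |((1 / (1 - α)) * Real.log (∑ i, p i ^ α)) / (1 - p ⟨0, by omega⟩) - α / (α - 1)| < ε := by
  intro ε hε
  have hlower : Tendsto (fun t : ℝ => (α - t ^ (α - 1) / (1 - t) ^ α) / (α - 1)) (𝓝[>] 0)
      (𝓝 (α / (α - 1))) := by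
    simpa using tendsto_nhdsWithin_of_tendsto_nhds
      ((tendsto_rpow_div_one_sub_rpow_nhds_zero (sub_pos.2 hα) α).const_sub α |>.div_const (α - 1))
  have hupper : Tendsto (fun t : ℝ => α / (α - 1) / (1 - t)) (𝓝[>] 0) (𝓝 (α / (α - 1))) := by
    have hcont : ContinuousAt (fun t : ℝ => α / (α - 1) / (1 - t)) 0 := by
      fun_prop (disch := norm_num)
    simpa using tendsto_nhdsWithin_of_tendsto_nhds hcont.tendsto
  obtain ⟨δ, hδ, hsqueeze⟩ := exists_pos_abs_sub_lt_of_squeeze hlower hupper hε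
  refine ⟨min δ 1, lt_min hδ one_pos, fun p hp hsum _ hnear hlt => ?_⟩
  obtain ⟨hS₀, hS₁⟩ := rpow_le_sum_rpow_le_of_sum_eq_one hp hsum ⟨0, by omega⟩ hα.le
  obtain ⟨hgx, hxh⟩ := renyiEntropy_div_bounds_of_rpow_le (t := 1 - p ⟨0, by omega⟩)
    (S := ∑ i, p i ^ α) hα (by linarith) (by linarith [min_le_right δ 1])
    (by rwa [sub_sub_cancel]) (by rwa [sub_sub_cancel])
  exact hsqueeze _ _ (by linarith) (by linarith [min_le_left δ 1]) hgx hxh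
end

section
/- For any reals α, β with 1 < α < β ≤ ∞, there exist p₀ ∈ (0,1) and n ∈ ℕ with n ≥ 1 such that the probability distribution p = (p₀, (1-p₀)/n, ..., (1-p₀)/n) on n+1 points satisfies H_α(p) > ln 2 and H_β(p) < ln 2, where H_γ(p) = (1/(1-γ)) ln(p₀^γ + (1-p₀)^γ/n^{γ-1}) for finite γ and H_∞(p) = -ln p₀. -/
/-!
Pick `p₀` with `2 ^ (β⁻¹ - 1) < p₀ < 2 ^ (α⁻¹ - 1)`, possible since `γ ↦ γ⁻¹ - 1` decreases.
Then `p₀ ^ β > 2 ^ (1 - β)`, so the single large atom already pushes the power sum of order `β`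
above `2 ^ (1 - β)`, i.e. `H_β < ln 2`; and `p₀ > 1/2` gives `H_∞ < ln 2`. On the other hand
`p₀ ^ α < 2 ^ (1 - α)`, and the tail `(1 - p₀) ^ α / n ^ (α - 1)` tends to `0` as `n → ∞`, so for
large `n` the power sum of order `α` stays below `2 ^ (1 - α)`, i.e. `H_α > ln 2`.
-/

open Real Filter Topology

namespace Renyi

variable {γ c S : ℝ}

theorem log_lt_one_div_one_sub_mul_log_iff (hγ : 1 < γ) (hc : 0 < c) (hS : 0 < S) :
    log c < 1 / (1 - γ) * log S ↔ S < c ^ (1 - γ) := by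
  rw [one_div_mul_eq_div, lt_div_iff_of_neg (by linarith), mul_comm, ← log_rpow hc,
    log_lt_log_iff hS (rpow_pos_of_pos hc _)]

theorem one_div_one_sub_mul_log_lt_log_iff (hγ : 1 < γ) (hc : 0 < c) (hS : 0 < S) :
    1 / (1 - γ) * log S < log c ↔ c ^ (1 - γ) < S := by
  rw [one_div_mul_eq_div, div_lt_iff_of_neg (by linarith), mul_comm, ← log_rpow hc,
    log_lt_log_iff (rpow_pos_of_pos hc _) hS]

theorem rpow_inv_sub_one_rpow (hc : 0 ≤ c) (hγ : 0 < γ) :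
    (c ^ (γ⁻¹ - 1)) ^ γ = c ^ (1 - γ) := by
  rw [← rpow_mul hc]
  congr 1
  field_simp

theorem tendsto_div_natCast_rpow_sub_one (hγ : 1 < γ) (C : ℝ) :
    Tendsto (fun n : ℕ ↦ C / (n : ℝ) ^ (γ - 1)) atTop (𝓝 0) :=
  tendsto_const_nhds.div_atTop
    ((tendsto_rpow_atTop (by linarith)).comp tendsto_natCast_atTop_atTop)

theorem exists_mass_between_rpow_thresholds {α β : ℝ} (hα : 1 < α) (hαβ : α < β) :
    ∃ p₀ : ℝ, 2⁻¹ < p₀ ∧ p₀ < 1 ∧ p₀ ^ α < 2 ^ (1 - α) ∧ 2 ^ (1 - β) < p₀ ^ β := by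
  have hβ : 0 < β := by linarith
  obtain ⟨p₀, hlo, hhi⟩ : ∃ p₀, (2 : ℝ) ^ (β⁻¹ - 1) < p₀ ∧ p₀ < 2 ^ (α⁻¹ - 1) :=
    exists_between <| rpow_lt_rpow_of_exponent_lt one_lt_two
      (by linarith [(inv_lt_inv₀ hβ (by linarith)).2 hαβ])
  have hhalf : (2 : ℝ)⁻¹ < p₀ := by
    refine lt_trans ?_ hlo
    rw [← rpow_neg_one]
    exact rpow_lt_rpow_of_exponent_lt one_lt_two (by linarith [inv_pos.2 hβ])
  have hp₀ : 0 ≤ p₀ := by linarith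
  refine ⟨p₀, hhalf, ?_, ?_, ?_⟩
  · exact hhi.trans (rpow_lt_one_of_one_lt_of_neg one_lt_two
      (by linarith [inv_lt_one_of_one_lt₀ hα]))
  · rwa [← rpow_inv_sub_one_rpow zero_le_two (by linarith),
      rpow_lt_rpow_iff hp₀ (by positivity) (by linarith)]
  · rwa [← rpow_inv_sub_one_rpow zero_le_two hβ, rpow_lt_rpow_iff (by positivity) hp₀ hβ]

end Renyi

open Renyi

/-- The last conjunct is the case `β = ∞`, where `H_∞(p) = -ln p₀`. -/
theorem renyi_conflict_construction (α β : ℝ) (hα : 1 < α) (hαβ : α < β) :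
    ∃ p₀ ∈ Set.Ioo (0 : ℝ) 1, ∃ n : ℕ, 1 ≤ n ∧
      (1 / (1 - α)) * Real.log (p₀ ^ α + (1 - p₀) ^ α / (n : ℝ) ^ (α - 1))
        > Real.log 2 ∧
      (1 / (1 - β)) * Real.log (p₀ ^ β + (1 - p₀) ^ β / (n : ℝ) ^ (β - 1))
        < Real.log 2 ∧
      -Real.log p₀ < Real.log 2 := by
  obtain ⟨p₀, hhalf, hp₀_lt_one, hpowα, hpowβ⟩ := exists_mass_between_rpow_thresholds hα hαβ
  have hp₀ : 0 < p₀ := by linarith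
  obtain ⟨n, hn, hsumα⟩ := ((eventually_ge_atTop 1).and
    (((tendsto_const_nhds (x := p₀ ^ α)).add
      (tendsto_div_natCast_rpow_sub_one hα ((1 - p₀) ^ α))).eventually
        (gt_mem_nhds (by rwa [add_zero])))).exists
  have hn₀ : (0 : ℝ) < n := by exact_mod_cast hn
  refine ⟨p₀, ⟨hp₀, hp₀_lt_one⟩, n, hn, ?_, ?_, ?_⟩
  · rw [gt_iff_lt, log_lt_one_div_one_sub_mul_log_iff hα two_pos (by positivity)]
    exact hsumα
  · rw [one_div_one_sub_mul_log_lt_log_iff (hα.trans hαβ) two_pos (by positivity)]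
    exact hpowβ.trans (lt_add_of_pos_right _ (by positivity))
  · rw [neg_lt, ← log_inv]
    exact log_lt_log (by norm_num) hhalf
end

section
/- For any reals α, β with 0 ≤ α < β < 1, there exist integers m ≥ 2 and n ≥ 2 such that (1/(1-α)) ln((1/2)^α + (1/2)^α n^{1-α}) > ln m > (1/(1-β)) ln((1/2)^β + (1/2)^β n^{1-β}). -/
/-!
Write `c γ = (1/2) ^ (γ / (1 - γ))`, so that `(c γ * x) ^ (1 - γ) = (1/2) ^ γ * x ^ (1 - γ)`.
The order-`γ` entropy `H γ n` of the peaked distribution therefore lies above `log (c γ * n)`,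
and below `log (r * n)` for any `r > c γ` once `n` is large. Since `γ / (1 - γ)` increases on
`γ < 1`, we have `c β < c α`; choosing `c β < r < c α` and `n` large, the interval
`[r * n, c α * n)` has length greater than one, and any integer `m` in it satisfies
`H β n < log m < H α n`.
-/

open Real Filter

noncomputable section

/-- The order-`γ` Rényi entropy of `(1/2, 1/(2x), …, 1/(2x))`. -/
def peakedRenyi (γ x : ℝ) : ℝ :=
  (1 / (1 - γ)) * log ((1 / 2 : ℝ) ^ γ + (1 / 2 : ℝ) ^ γ * x ^ (1 - γ))

def peakedSlope (γ : ℝ) : ℝ := (1 / 2 : ℝ) ^ (γ / (1 - γ))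

end

lemma one_div_mul_log_lt_log_iff {p A y : ℝ} (hp : 0 < p) (hA : 0 < A) (hy : 0 < y) :
    1 / p * log A < log y ↔ A < y ^ p := by
  rw [one_div, inv_mul_lt_iff₀ hp, ← log_rpow hy, log_lt_log_iff hA (rpow_pos_of_pos hy p)]

lemma log_lt_one_div_mul_log_iff {p A y : ℝ} (hp : 0 < p) (hA : 0 < A) (hy : 0 < y) :
    log y < 1 / p * log A ↔ y ^ p < A := by
  rw [one_div, lt_inv_mul_iff₀ hp, ← log_rpow hy, log_lt_log_iff (rpow_pos_of_pos hy p) hA]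

lemma peakedSlope_pos (γ : ℝ) : 0 < peakedSlope γ :=
  rpow_pos_of_pos one_half_pos _

lemma peakedSlope_rpow {γ : ℝ} (hγ : γ < 1) : peakedSlope γ ^ (1 - γ) = (1 / 2 : ℝ) ^ γ := by
  rw [peakedSlope, ← rpow_mul one_half_pos.le, div_mul_cancel₀ _ (sub_ne_zero.mpr hγ.ne')]

lemma peakedSlope_lt_peakedSlope {α β : ℝ} (hαβ : α < β) (hβ : β < 1) :
    peakedSlope β < peakedSlope α := by
  apply rpow_lt_rpow_of_exponent_gt one_half_pos one_half_lt_one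
  rw [div_lt_div_iff₀ (by linarith) (by linarith)]
  nlinarith

lemma log_peakedSlope_mul_lt_peakedRenyi {γ x : ℝ} (hγ : γ < 1) (hx : 0 < x) :
    log (peakedSlope γ * x) < peakedRenyi γ x := by
  have hhalf : 0 < (1 / 2 : ℝ) ^ γ := rpow_pos_of_pos one_half_pos γ
  have hxp : 0 < x ^ (1 - γ) := rpow_pos_of_pos hx _
  rw [peakedRenyi, log_lt_one_div_mul_log_iff (by linarith) (by positivity)
    (mul_pos (peakedSlope_pos γ) hx), mul_rpow (peakedSlope_pos γ).le hx.le, peakedSlope_rpow hγ]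
  linarith

lemma eventually_peakedRenyi_lt_log_mul {γ c : ℝ} (hγ : γ < 1) (hc : peakedSlope γ < c) :
    ∀ᶠ x in atTop, peakedRenyi γ x < log (c * x) := by
  have hp : 0 < 1 - γ := by linarith
  have hc0 : 0 < c := (peakedSlope_pos γ).trans hc
  have hgap : (1 / 2 : ℝ) ^ γ < c ^ (1 - γ) := by
    rw [← peakedSlope_rpow hγ]
    exact rpow_lt_rpow (peakedSlope_pos γ).le hc hp
  have hlarge : ∀ᶠ x : ℝ in atTop, (1 / 2 : ℝ) ^ γ / (c ^ (1 - γ) - (1 / 2) ^ γ) < x ^ (1 - γ) :=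
    (tendsto_rpow_atTop hp).eventually_gt_atTop _
  filter_upwards [hlarge, eventually_gt_atTop 0] with x hx hx0
  have hhalf : 0 < (1 / 2 : ℝ) ^ γ := rpow_pos_of_pos one_half_pos γ
  have hxp : 0 < x ^ (1 - γ) := rpow_pos_of_pos hx0 _
  rw [div_lt_iff₀ (sub_pos.mpr hgap)] at hx
  rw [peakedRenyi, one_div_mul_log_lt_log_iff hp (by positivity) (mul_pos hc0 hx0),
    mul_rpow hc0.le hx0.le]
  linarith

theorem renyi_conflict_small_orders_general (α β : ℝ) (hαβ : α < β)
    (hβ : β < 1) :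
    ∃ m n : ℕ, 2 ≤ m ∧ 2 ≤ n ∧
      (1 / (1 - α)) * Real.log ((1 / 2 : ℝ) ^ α + (1 / 2 : ℝ) ^ α * (n : ℝ) ^ (1 - α))
        > Real.log m ∧
      Real.log m >
        (1 / (1 - β)) * Real.log ((1 / 2 : ℝ) ^ β + (1 / 2 : ℝ) ^ β * (n : ℝ) ^ (1 - β)) := by
  obtain ⟨r, hβr, hrα⟩ := exists_between (peakedSlope_lt_peakedSlope hαβ hβ)
  have hr : 0 < r := (peakedSlope_pos β).trans hβr
  have hwide : ∀ᶠ x : ℝ in atTop, 1 < r * x ∧ r * x + 1 < peakedSlope α * x := by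
    refine ((tendsto_id.const_mul_atTop hr).eventually_gt_atTop 1).and ?_
    filter_upwards [(tendsto_id.const_mul_atTop (sub_pos.mpr hrα)).eventually_gt_atTop 1]
      with x hx
    simp only [id] at hx
    linarith
  obtain ⟨n, ⟨hβn, hrn, hrnα⟩, hn⟩ := (tendsto_natCast_atTop_atTop.eventually
    ((eventually_peakedRenyi_lt_log_mul hβ hβr).and hwide) |>.and (eventually_ge_atTop 2)).exists
  set m := ⌈r * n⌉₊
  have hrm : r * n ≤ m := Nat.le_ceil _
  have hmα : (m : ℝ) < peakedSlope α * n := (Nat.ceil_lt_add_one (by linarith)).trans hrnα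
  have hm : 2 ≤ m := Nat.succ_le_of_lt (Nat.lt_ceil.mpr (by exact_mod_cast hrn))
  refine ⟨m, n, hm, hn, ?_, ?_⟩
  · calc log m < log (peakedSlope α * n) := log_lt_log (by positivity) hmα
      _ < peakedRenyi α n := log_peakedSlope_mul_lt_peakedRenyi (hαβ.trans hβ) (by positivity)
  · calc peakedRenyi β n < log (r * n) := hβn
      _ ≤ log m := log_le_log (by linarith) hrm

/-- Inequality (7) in Lemma 1: for any `0 ≤ α < β < 1` there exist `m, n ≥ 2`
such that the order-`α` Rényi entropy of the peaked distribution
`(1/2, 1/(2n), ..., 1/(2n))` exceeds `ln m`, while its order-`β` entropy is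
below `ln m`. -/
theorem renyi_conflict_small_orders (α β : ℝ) (hα : 0 ≤ α) (hαβ : α < β)
    (hβ : β < 1) :
    ∃ m n : ℕ, 2 ≤ m ∧ 2 ≤ n ∧
      (1 / (1 - α)) * Real.log ((1 / 2 : ℝ) ^ α + (1 / 2 : ℝ) ^ α * (n : ℝ) ^ (1 - α))
        > Real.log m ∧
      Real.log m >
        (1 / (1 - β)) * Real.log ((1 / 2 : ℝ) ^ β + (1 / 2 : ℝ) ^ β * (n : ℝ) ^ (1 - β)) :=
  renyi_conflict_small_orders_general α β hαβ hβ
end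

section
/- Let t_N, s_N ∈ (0, 1) with t_N → 0 and s_N → 0. Then limsup_N (t_N ln t_N)/(s_N ln s_N) = 0 if and only if limsup_N t_N/s_N = 0, and limsup_N (t_N ln t_N)/(s_N ln s_N) = ∞ if and only if limsup_N t_N/s_N = ∞. -/
/-!
Write `r = t / s`. Since `t log t / (s log s) = r + r log r / log s` and `r log r ≥ -1`, the
entropy ratio exceeds the linear one by at most `-1 / log s → 0`. Conversely, `x ↦ x log x`
decreases on `(0, e⁻¹]`, so the entropy ratio is at least `min r M · (1 + log M / log s)` for
every `M > 0`, and the factor `1 + log M / log s` tends to `1`. Hence the two ratios tend to `0`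
together and are bounded above together.
-/

open Filter Real Topology Set

namespace Real

lemma mul_log_div_mul_log_le_div_sub_inv_log {t s : ℝ} (ht : 0 < t) (hs : 0 < s) (hs1 : s < 1) :
    t * log t / (s * log s) ≤ t / s - (log s)⁻¹ := by
  have hls : log s < 0 := log_neg hs hs1
  have hr : 0 < t / s := div_pos ht hs
  have hsplit : t * log t / (s * log s) = t / s + t / s * log (t / s) / log s := by
    have := hls.ne
    rw [log_div ht.ne' hs.ne']
    field_simp
    ring
  have hmin : -1 ≤ t / s * log (t / s) := by linarith [self_sub_one_le_mul_log hr.le]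
  have hcorr : t / s * log (t / s) / log s ≤ -(log s)⁻¹ := by
    rw [div_le_iff_of_neg hls, neg_mul, inv_mul_cancel₀ hls.ne]
    exact hmin
  linarith

lemma mul_log_div_mul_log_pos {t s : ℝ} (ht : 0 < t) (ht1 : t < 1) (hs : 0 < s) (hs1 : s < 1) :
    0 < t * log t / (s * log s) :=
  div_pos_of_neg_of_neg (mul_log_neg ht ht1) (mul_log_neg hs hs1)

lemma min_mul_one_add_log_div_log_le {t s M : ℝ} (ht : 0 < t) (ht1 : t ≤ exp (-1)) (hs : 0 < s)
    (hs1 : s < 1) (hM : 0 < M) :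
    min (t / s) M * (1 + log M / log s) ≤ t * log t / (s * log s) := by
  have hls : log s < 0 := log_neg hs hs1
  have hfactor : 1 + log M / log s = log (M * s) / log s := by
    rw [log_mul hM.ne' hs.ne', add_div, div_self hls.ne, add_comm]
  rcases le_total t (M * s) with hle | hge
  · have hmin : min (t / s) M = t / s := min_eq_left ((div_le_iff₀ hs).2 hle)
    calc min (t / s) M * (1 + log M / log s) = t / s * (log (M * s) / log s) := by
          rw [hmin, hfactor]
      _ ≤ t / s * (log t / log s) :=
          mul_le_mul_of_nonneg_left (div_le_div_of_nonpos_of_le hls.le (log_le_log ht hle))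
            (div_pos ht hs).le
      _ = t * log t / (s * log s) := by field_simp
  · have hmin : min (t / s) M = M := min_eq_right ((le_div_iff₀ hs).2 hge)
    have hmono : t * log t ≤ M * s * log (M * s) :=
      mul_log_strictAntiOn.antitoneOn ⟨(mul_pos hM hs).le, hge.trans ht1⟩ ⟨ht.le, ht1⟩ hge
    calc min (t / s) M * (1 + log M / log s) = M * s * log (M * s) / (s * log s) := by
          rw [hmin, hfactor]
          field_simp
      _ ≤ t * log t / (s * log s) :=
          div_le_div_of_nonpos_of_le (mul_neg_of_pos_of_neg hs hls).le hmono

end Real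

section Limits

variable {α : Type*} {l : Filter α} {t s : α → ℝ}

lemma EReal.limsup_coe_eq_zero_iff [l.NeBot] {f : α → ℝ} (hf : 0 ≤ᶠ[l] f) :
    limsup (fun x => (f x : EReal)) l = 0 ↔ Tendsto f l (𝓝 0) := by
  rw [← EReal.tendsto_coe, EReal.coe_zero]
  refine ⟨fun h => tendsto_of_liminf_eq_limsup (le_antisymm (h ▸ liminf_le_limsup) ?_) h,
    Tendsto.limsup_eq⟩
  exact le_liminf_of_le (by isBoundedDefault) (hf.mono fun x hx => EReal.coe_nonneg.2 hx)

lemma EReal.limsup_coe_eq_top_iff {f : α → ℝ} :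
    limsup (fun x => (f x : EReal)) l = ⊤ ↔ ¬IsBoundedUnder (· ≤ ·) l f := by
  rw [← not_iff_not, not_not, ← Ne, ← lt_top_iff_ne_top]
  constructor
  · intro h
    obtain ⟨C, hC, -⟩ := EReal.exists_between_coe_real h
    exact isBoundedUnder_of_eventually_le
      ((eventually_lt_of_limsup_lt hC).mono fun x hx => (EReal.coe_lt_coe_iff.1 hx).le)
  · rintro ⟨C, hC⟩
    refine (limsup_le_of_le (by isBoundedDefault) ?_).trans_lt (EReal.coe_lt_top C)
    exact (eventually_map.1 hC).mono fun x hx => EReal.coe_le_coe_iff.2 hx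

lemma tendsto_inv_log_of_tendsto_nhdsGT_zero (hs : Tendsto s l (𝓝[>] 0)) :
    Tendsto (fun x => (log (s x))⁻¹) l (𝓝 0) :=
  tendsto_inv_atBot_zero.comp (tendsto_log_nhdsGT_zero.comp hs)

theorem tendsto_mul_log_div_mul_log_nhds_zero_iff (ht : Tendsto t l (𝓝[>] 0))
    (hs : Tendsto s l (𝓝[>] 0)) :
    Tendsto (fun x => t x * log (t x) / (s x * log (s x))) l (𝓝 0) ↔
      Tendsto (fun x => t x / s x) l (𝓝 0) := by
  have hsmall : ∀ᶠ x in l, t x ∈ Ioo 0 (exp (-1)) ∧ s x ∈ Ioo 0 1 :=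
    (ht.eventually_mem (Ioo_mem_nhdsGT (exp_pos _))).and
      (hs.eventually_mem (Ioo_mem_nhdsGT one_pos))
  constructor
  · intro h
    have hmin : Tendsto (fun x => min (t x / s x) 1) l (𝓝 0) := by
      refine tendsto_of_tendsto_of_tendsto_of_le_of_le' tendsto_const_nhds h ?_ ?_
      all_goals filter_upwards [hsmall] with x ⟨htx, hsx⟩
      · exact le_min (div_pos htx.1 hsx.1).le zero_le_one
      · simpa using min_mul_one_add_log_div_log_le htx.1 htx.2.le hsx.1 hsx.2 one_pos
    refine hmin.congr' ?_
    filter_upwards [hmin.eventually (gt_mem_nhds one_pos)] with x hx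
    exact min_eq_left ((min_lt_iff.1 hx).resolve_right (lt_irrefl 1)).le
  · intro h
    refine tendsto_of_tendsto_of_tendsto_of_le_of_le' tendsto_const_nhds
      (by simpa using h.sub (tendsto_inv_log_of_tendsto_nhdsGT_zero hs)) ?_ ?_
    all_goals filter_upwards [hsmall] with x ⟨htx, hsx⟩
    · exact (mul_log_div_mul_log_pos htx.1 (htx.2.trans (by norm_num)) hsx.1 hsx.2).le
    · exact mul_log_div_mul_log_le_div_sub_inv_log htx.1 hsx.1 hsx.2

theorem isBoundedUnder_le_mul_log_div_mul_log_iff (ht : Tendsto t l (𝓝[>] 0))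
    (hs : Tendsto s l (𝓝[>] 0)) :
    IsBoundedUnder (· ≤ ·) l (fun x => t x * log (t x) / (s x * log (s x))) ↔
      IsBoundedUnder (· ≤ ·) l (fun x => t x / s x) := by
  have hsmall : ∀ᶠ x in l, t x ∈ Ioo 0 (exp (-1)) ∧ s x ∈ Ioo 0 1 :=
    (ht.eventually_mem (Ioo_mem_nhdsGT (exp_pos _))).and
      (hs.eventually_mem (Ioo_mem_nhdsGT one_pos))
  constructor
  · rintro ⟨C, hC⟩
    rw [eventually_map] at hC
    -- any `M > 2 C` works, because the factor `1 + log M / log s` eventually exceeds `1 / 2`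
    obtain ⟨M, hMdef⟩ : ∃ M, M = 2 * |C| + 1 := ⟨_, rfl⟩
    have hM : 0 < M := by rw [hMdef]; positivity
    have hfactor : ∀ᶠ x in l, 1 / 2 < 1 + log M / log (s x) := by
      have := ((tendsto_inv_log_of_tendsto_nhdsGT_zero hs).const_mul (log M)).const_add 1
      simp only [mul_zero, add_zero] at this
      exact this.eventually (lt_mem_nhds (by norm_num))
    refine isBoundedUnder_of_eventually_le (a := M) ?_
    filter_upwards [hC, hfactor, hsmall] with x hCx hfx ⟨htx, hsx⟩
    have hlow := min_mul_one_add_log_div_log_le htx.1 htx.2.le hsx.1 hsx.2 hM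
    have hpos : 0 < min (t x / s x) M := lt_min (div_pos htx.1 hsx.1) hM
    have hlt : min (t x / s x) M < M := by
      nlinarith [le_abs_self C, mul_lt_mul_of_pos_left hfx hpos]
    exact ((min_lt_iff.1 hlt).resolve_right (lt_irrefl M)).le
  · intro h
    have hcorr := (tendsto_inv_log_of_tendsto_nhdsGT_zero hs).neg.isBoundedUnder_le
    refine (isBoundedUnder_le_add h hcorr).mono_le ?_
    filter_upwards [hsmall] with x ⟨htx, hsx⟩
    exact mul_log_div_mul_log_le_div_sub_inv_log htx.1 hsx.1 hsx.2

end Limits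

/-- Comparison of the Shannon scale `t ln t` with the linear scale `t` in
Proposition 2: for `t_N, s_N ∈ (0,1)` tending to `0`, the limsup of
`(t_N ln t_N)/(s_N ln s_N)` is `0` (resp. `∞`) iff the limsup of `t_N/s_N`
is `0` (resp. `∞`). -/
theorem limsup_ratio_log_scale_equiv (t s : ℕ → ℝ)
    (ht : ∀ N, t N ∈ Set.Ioo (0 : ℝ) 1) (hs : ∀ N, s N ∈ Set.Ioo (0 : ℝ) 1)
    (ht0 : Tendsto t atTop (nhds 0)) (hs0 : Tendsto s atTop (nhds 0)) :
    (Filter.limsup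
        (fun N => (((t N * Real.log (t N)) / (s N * Real.log (s N)) : ℝ) : EReal))
        atTop = 0 ↔
      Filter.limsup (fun N => ((t N / s N : ℝ) : EReal)) atTop = 0) ∧
    (Filter.limsup
        (fun N => (((t N * Real.log (t N)) / (s N * Real.log (s N)) : ℝ) : EReal))
        atTop = ⊤ ↔
      Filter.limsup (fun N => ((t N / s N : ℝ) : EReal)) atTop = ⊤) := by
  have ht' : Tendsto t atTop (𝓝[>] 0) :=
    tendsto_nhdsWithin_iff.2 ⟨ht0, .of_forall fun N => (ht N).1⟩
  have hs' : Tendsto s atTop (𝓝[>] 0) :=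
    tendsto_nhdsWithin_iff.2 ⟨hs0, .of_forall fun N => (hs N).1⟩
  have hentropy : ∀ N, 0 ≤ t N * log (t N) / (s N * log (s N)) := fun N =>
    (mul_log_div_mul_log_pos (ht N).1 (ht N).2 (hs N).1 (hs N).2).le
  have hlinear : ∀ N, 0 ≤ t N / s N := fun N => (div_pos (ht N).1 (hs N).1).le
  rw [EReal.limsup_coe_eq_zero_iff (.of_forall hentropy),
    EReal.limsup_coe_eq_zero_iff (.of_forall hlinear),
    EReal.limsup_coe_eq_top_iff, EReal.limsup_coe_eq_top_iff]
  exact ⟨tendsto_mul_log_div_mul_log_nhds_zero_iff ht' hs',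
    not_congr (isBoundedUnder_le_mul_log_div_mul_log_iff ht' hs')⟩
end
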